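/- arXiv:2302.13670 — 4 statements merged into one kernel-verified Lean document; each statement's English description precedes it below -/
import Mathlib

section
/- Let g ∈ ℤ[X] be monic and separable of degree d with roots x₁, …, x_d ∈ ℂ, let q be a prime such that g has d distinct roots y₁, …, y_d in ℤ/qℤ, and let α₁, …, α_d ∈ ℤ. If ∑_{j=1}^d α_j x_j ≠ 0 in ℂ, then for all sufficiently large such q (matching the roots via the reduction from the ring of integers), (1/q) ∑_{a ∈ ℤ/qℤ} e(a·(∑_j α_j y_j)/q) = 0, whereas if ∑_j α_j x_j = 0 then this average equals 1. In other words, the Weyl sums of the random variables U_p are stationary: they equal the indicator of the relation ∑_j α_j x_j = 0 for all large q. -/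
open NumberField
open scoped Classical

/-- e(t/q) for t ∈ ℤ/qℤ. -/
noncomputable def stdAddChar (q : ℕ) (t : ZMod q) : ℂ :=
  Complex.exp (2 * Real.pi * Complex.I * (t.val : ℂ) / q)

lemma stdAddChar_eq (q : ℕ) [NeZero q] (t : ZMod q) :
    stdAddChar q t = ZMod.stdAddChar t := by
  have h : ((t.val : ℤ) : ZMod q) = t := by push_cast; simp [ZMod.natCast_val]
  rw [← h, ZMod.stdAddChar_coe]
  simp [stdAddChar, h]

set_option synthInstance.maxHeartbeats 1000000 in
/-- the Weyl sums are stationary: for all sufficiently large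
primes q (with roots matched via a reduction map from the ring of integers of
the splitting field), the average over a mod q of e(a·∑ αⱼyⱼ/q) equals the
indicator of the relation ∑ αⱼxⱼ = 0 in ℂ (equivalently, in the ring of
integers). -/
theorem stmt_4 (g : Polynomial ℤ) (hmonic : g.Monic) (hsep : g.Separable)
    (d : ℕ) (hd : g.natDegree = d)
    (K : Type) [Field K] [NumberField K]
    (x : Fin d → 𝓞 K) (hroots : ∀ j, Polynomial.aeval (x j) g = 0)
    (hinj : Function.Injective x)
    (α : Fin d → ℤ) :
    ∃ N : ℕ, ∀ (q : ℕ) [NeZero q], q.Prime → N < q →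
      ∀ φ : 𝓞 K →+* ZMod q, Function.Injective (φ ∘ x) →
        (q : ℂ)⁻¹ * ∑ a : ZMod q, stdAddChar q (a * φ (∑ j, α j • x j))
          = if (∑ j, α j • x j) = (0 : 𝓞 K) then 1 else 0 := by
  set S : 𝓞 K := ∑ j, α j • x j with hS
  refine ⟨(Algebra.norm ℤ S).natAbs, fun q _ hq hNq φ _ => ?_⟩
  have hq0 : (q : ℂ) ≠ 0 := Nat.cast_ne_zero.mpr hq.ne_zero
  by_cases h : S = 0
  · simp only [h, if_pos rfl, map_zero, mul_zero]
    have : ∀ a : ZMod q, stdAddChar q (0 : ZMod q) = 1 := by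
      intro a; simp [stdAddChar]
    rw [Finset.sum_congr rfl (fun a _ => this a)]
    simp [Finset.card_univ, ZMod.card, hq0, inv_mul_cancel₀]
  · rw [if_neg h]
    -- φ S ≠ 0
    have hφS : φ S ≠ 0 := by
      intro h0
      have hmem : S ∈ RingHom.ker φ := h0
      have hdvd : (Ideal.absNorm (RingHom.ker φ) : ℤ) ∣ Algebra.norm ℤ S :=
        Ideal.absNorm_dvd_norm_of_mem hmem
      have hcard : Ideal.absNorm (RingHom.ker φ) = q := by
        rw [Ideal.absNorm_apply, Submodule.cardQuot_apply]
        rw [Nat.card_congr (RingHom.quotientKerEquivOfSurjective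
          (ZMod.ringHom_surjective φ)).toEquiv]
        simp [Nat.card_eq_fintype_card, ZMod.card]
      have hnz : (Algebra.norm ℤ S).natAbs ≠ 0 := by
        intro h0'
        apply h
        have : Ideal.absNorm (Ideal.span {S}) = 0 := by
          rwa [Ideal.absNorm_span_singleton]
        rw [Ideal.absNorm_eq_zero_iff, Ideal.span_singleton_eq_bot] at this
        exact this
      have : q ∣ (Algebra.norm ℤ S).natAbs := by
        have h2 : (q : ℤ) ∣ ((Algebra.norm ℤ S).natAbs : ℤ) :=
          Int.dvd_natAbs.mpr (hcard ▸ hdvd)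
        exact_mod_cast h2
      have := Nat.le_of_dvd (Nat.pos_of_ne_zero hnz) this
      omega
    have hsum : ∑ a : ZMod q, ZMod.stdAddChar (a * φ S) = 0 := by
      have := AddChar.sum_mulShift (ψ := ZMod.stdAddChar (N := q)) (φ S)
        (ZMod.isPrimitive_stdAddChar q)
      rw [if_neg hφS] at this
      simpa using this
    rw [Finset.sum_congr rfl (fun a _ => stdAddChar_eq q (a * φ S)), hsum, mul_zero]
end

section
/- Let g ∈ ℤ[X] be monic separable with root set Z_g ⊂ ℂ. Let H ⊆ (S¹)^{Z_g} be the closed subgroup of functions f : Z_g → S¹ satisfying ∏_{x ∈ Z_g} f(x)^{α(x)} = 1 for every integer-valued α with ∑_x α(x)·x = 0. If U is a random function uniformly distributed (Haar) on H and σ(U) = ∑_{x ∈ Z_g} U(x), then E[|σ(U)|²] = |Z_g|, and E[σ(U)] = 1 if 0 ∈ Z_g and E[σ(U)] = 0 otherwise. -/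
open MeasureTheory
open scoped Classical

/-!
The maps `f ↦ f x` and `f ↦ f x / f y` are continuous characters of `H`, and the integral of a
character against a Haar probability measure is `1` if it is trivial and `0` otherwise
(translating by a point where it is not `1` multiplies the integral by that value). Expanding
`|σ|² = ∑ₓ ∑ᵧ U(x) / U(y)`, both moments reduce to deciding which of these characters are trivial
on `H`. The relation `1 · 0 = 0` makes `f ↦ f 0` trivial. Conversely, for `w ≠ 0` the function
`z ↦ exp (i Re (π z / w))` lies in `H`, because the real-linear map `z ↦ Re (π z / w)` turns any
relation `∑ α(x) x = 0` into `∑ α(x) Re (π x / w) = 0`; it takes the value `-1` at `w`, so it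
detects `x ≠ 0` (take `w = x`) and `x ≠ y` (take `w = x - y`).
-/

section Character

variable {G : Type*} [Group G] [TopologicalSpace G] [MeasurableSpace G]

theorem integral_continuousMonoidHom_circle [MeasurableMul G] (μ : Measure G)
    [μ.IsMulLeftInvariant] [IsProbabilityMeasure μ] (χ : G →ₜ* Circle) :
    ∫ g, (χ g : ℂ) ∂μ = if χ = 1 then 1 else 0 := by
  split_ifs with hχ
  · simp [hχ]
  obtain ⟨h, hh⟩ : ∃ h, χ h ≠ 1 := 
    not_forall.mp fun h1 => hχ (ContinuousMonoidHom.ext h1)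
  have htrans : (χ h : ℂ) * ∫ g, (χ g : ℂ) ∂μ = ∫ g, (χ g : ℂ) ∂μ := by
    simpa only [map_mul, Circle.coe_mul, integral_const_mul] using
      integral_mul_left_eq_self (fun g => (χ g : ℂ)) h
  by_contra hI
  exact hh (Circle.coe_eq_one.mp ((mul_eq_right₀ hI).mp htrans))

theorem integrable_continuousMonoidHom_circle [OpensMeasurableSpace G] (μ : Measure G)
    [IsFiniteMeasure μ] (χ : G →ₜ* Circle) : Integrable (fun g => (χ g : ℂ)) μ :=
  Integrable.of_bound (by fun_prop : Continuous fun g => (χ g : ℂ)).aestronglyMeasurable 1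
    (Filter.Eventually.of_forall fun g => (Circle.norm_coe (χ g)).le)

end Character

noncomputable def evalChar {ι : Type*} (H : Subgroup (ι → Circle)) (x : ι) : H →ₜ* Circle :=
  ⟨(Pi.evalMonoidHom (fun _ => Circle) x).comp H.subtype,
    (continuous_apply x).comp continuous_subtype_val⟩

def AnnihilatesRelations (Z : Finset ℂ) (f : Z → Circle) : Prop :=
  ∀ α : ℂ → ℤ, (∑ x ∈ Z, (α x : ℂ) * x = 0) → ∏ x : Z, ((f x : ℂ) ^ (α (x : ℂ))) = 1

theorem annihilatesRelations_circleExp (Z : Finset ℂ) (u : ℂ) :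
    AnnihilatesRelations Z fun x => Circle.exp ((x : ℂ) * u).re := by
  intro α hα
  have hre : ∑ x : Z, (α x : ℝ) * ((x : ℂ) * u).re = 0 := by
    rw [Finset.sum_coe_sort Z fun x => (α x : ℝ) * (x * u).re]
    have := congrArg (fun z => (z * u).re) hα
    simpa only [Finset.sum_mul, Complex.re_sum, mul_assoc, ← Complex.ofReal_intCast,
      Complex.re_ofReal_mul, zero_mul, Complex.zero_re] using this
  calc ∏ x : Z, (Circle.exp ((x : ℂ) * u).re : ℂ) ^ α x
      = ∏ x : Z, Complex.exp ((α x : ℂ) * ((((x : ℂ) * u).re : ℂ) * Complex.I)) :=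
        Fintype.prod_congr _ _ fun x => by rw [Circle.coe_exp, ← Complex.exp_int_mul]
    _ = Complex.exp (((∑ x : Z, (α x : ℝ) * ((x : ℂ) * u).re : ℝ) : ℂ) * Complex.I) := by
        rw [← Complex.exp_sum]
        push_cast
        rw [Finset.sum_mul]
        simp only [mul_assoc]
    _ = 1 := by rw [hre, Complex.ofReal_zero, zero_mul, Complex.exp_zero]

theorem AnnihilatesRelations.apply_eq_one {Z : Finset ℂ} {f : Z → Circle}
    (hf : AnnihilatesRelations Z f) {x : Z} (hx : (x : ℂ) = 0) : f x = 1 := by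
  have hrel : ∑ z ∈ Z, ((if z = 0 then 1 else 0 : ℤ) : ℂ) * z = 0 :=
    Finset.sum_eq_zero fun z _ => by split_ifs with hz <;> simp [hz]
  have := hf _ hrel
  rw [Fintype.prod_eq_single x fun y hy => by simp [hx ▸ Subtype.coe_ne_coe.mpr hy]] at this
  exact Circle.coe_eq_one.mp (by simpa [hx] using this)

theorem circleExp_re_mul_pi_div_ne_one {w : ℂ} (hw : w ≠ 0) :
    Circle.exp (w * (Real.pi / w)).re ≠ 1 := by
  rw [mul_div_cancel₀ _ hw, Complex.ofReal_re]
  exact Circle.exp_pi_ne_one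

section Relations

variable {Z : Finset ℂ} {H : Subgroup (Z → Circle)}

theorem evalChar_eq_one_iff (hH : ∀ f, f ∈ H ↔ AnnihilatesRelations Z f) (x : Z) :
    evalChar H x = 1 ↔ (x : ℂ) = 0 := by
  constructor
  · intro h1
    by_contra hx
    have hmem := (hH _).2 (annihilatesRelations_circleExp Z (Real.pi / x))
    exact circleExp_re_mul_pi_div_ne_one hx (DFunLike.congr_fun h1 ⟨_, hmem⟩)
  · intro hx
    exact ContinuousMonoidHom.ext fun f => ((hH f).1 f.2).apply_eq_one hx

theorem evalChar_div_evalChar_eq_one_iff (hH : ∀ f, f ∈ H ↔ AnnihilatesRelations Z f)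
    (x y : Z) : evalChar H x / evalChar H y = 1 ↔ x = y := by
  constructor
  · intro h1
    by_contra hxy
    have hw : (x : ℂ) - y ≠ 0 := sub_ne_zero.mpr (Subtype.coe_ne_coe.mpr hxy)
    have hmem := (hH _).2 (annihilatesRelations_circleExp Z (Real.pi / (x - y)))
    apply circleExp_re_mul_pi_div_ne_one hw
    have : Circle.exp ((x : ℂ) * _).re / Circle.exp ((y : ℂ) * _).re = 1 :=
      DFunLike.congr_fun h1 ⟨_, hmem⟩
    rwa [← Circle.exp_sub, ← Complex.sub_re, ← sub_mul] at this
  · rintro rfl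
    exact div_self' _

end Relations

theorem ofReal_norm_sum_circle_sq {ι : Type*} (s : Finset ι) (a : ι → Circle) :
    ((‖∑ i ∈ s, (a i : ℂ)‖ ^ 2 : ℝ) : ℂ) = ∑ i ∈ s, ∑ j ∈ s, ((a i / a j : Circle) : ℂ) := by
  rw [Complex.ofReal_pow, ← Complex.mul_conj', map_sum, Finset.sum_mul_sum]
  simp only [div_eq_mul_inv, Circle.coe_mul, Circle.coe_inv_eq_conj]

theorem stmt_8_general
    (Z : Finset ℂ)
    (H : Subgroup (↥Z → Circle))
    (hH : ∀ f : ↥Z → Circle, f ∈ H ↔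
      ∀ α : ℂ → ℤ, (∑ x ∈ Z, (α x : ℂ) * x = 0) →
        ∏ x : ↥Z, ((f x : ℂ) ^ (α (x : ℂ))) = 1)
    [MeasurableSpace ↥H] [BorelSpace ↥H]
    (μ : Measure ↥H) [μ.IsHaarMeasure] [IsProbabilityMeasure μ] :
    (∫ f : ↥H, ‖∑ x : ↥Z, (((f : ↥Z → Circle) x : ℂ))‖ ^ 2 ∂μ) = (Z.card : ℝ) ∧
    (∫ f : ↥H, (∑ x : ↥Z, (((f : ↥Z → Circle) x : ℂ))) ∂μ)
      = if (0 : ℂ) ∈ Z then 1 else 0 := by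
  have hH' : ∀ f, f ∈ H ↔ AnnihilatesRelations Z f := hH
  have hint := integrable_continuousMonoidHom_circle μ
  have hσ : ∀ f : H, ∑ x : Z, ((f : Z → Circle) x : ℂ) = ∑ x : Z, (evalChar H x f : ℂ) :=
    fun f => rfl
  simp only [hσ]
  constructor
  · apply Complex.ofReal_injective
    rw [← integral_complex_ofReal]
    simp only [ofReal_norm_sum_circle_sq]
    calc ∫ f, ∑ x : Z, ∑ y : Z, ((evalChar H x / evalChar H y) f : ℂ) ∂μ
        = ∑ x : Z, ∑ y : Z, ∫ f, ((evalChar H x / evalChar H y) f : ℂ) ∂μ := by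
          rw [integral_finsetSum _ fun x _ => integrable_finsetSum _ fun y _ => hint _]
          exact Finset.sum_congr rfl fun x _ => integral_finsetSum _ fun y _ => hint _
      _ = ∑ x : Z, ∑ y : Z, if x = y then 1 else 0 := by
          simp only [integral_continuousMonoidHom_circle, evalChar_div_evalChar_eq_one_iff hH']
      _ = Z.card := by simp
  · rw [integral_finsetSum _ fun x _ => hint (evalChar H x)]
    simp only [integral_continuousMonoidHom_circle, evalChar_eq_one_iff hH']
    rw [Finset.sum_coe_sort Z fun z => if z = 0 then (1 : ℂ) else 0, Finset.sum_ite_eq']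

/-- moments of σ(U) = ∑_x U(x) for U Haar-uniform on the subgroup
H of (S¹)^{Z_g} orthogonal to the module of additive relations of g:
E[|σ(U)|²] = |Z_g| and E[σ(U)] = 1 or 0 according as 0 ∈ Z_g or not. -/
theorem stmt_8 (g : Polynomial ℤ) (hmonic : g.Monic) (hsep : g.Separable)
    (Z : Finset ℂ) (hZ : ∀ z : ℂ, z ∈ Z ↔ Polynomial.aeval z g = 0)
    (H : Subgroup (↥Z → Circle))
    (hH : ∀ f : ↥Z → Circle, f ∈ H ↔
      ∀ α : ℂ → ℤ, (∑ x ∈ Z, (α x : ℂ) * x = 0) →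
        ∏ x : ↥Z, ((f x : ℂ) ^ (α (x : ℂ))) = 1)
    [MeasurableSpace ↥H] [BorelSpace ↥H]
    (μ : Measure ↥H) [μ.IsHaarMeasure] [IsProbabilityMeasure μ] :
    (∫ f : ↥H, ‖∑ x : ↥Z, (((f : ↥Z → Circle) x : ℂ))‖ ^ 2 ∂μ) = (Z.card : ℝ) ∧
    (∫ f : ↥H, (∑ x : ↥Z, (((f : ↥Z → Circle) x : ℂ))) ∂μ)
      = if (0 : ℂ) ∈ Z then 1 else 0 :=
  stmt_8_general Z H hH μ
end

section
/- Let g ∈ ℤ[X] be monic of degree d ≥ 2 whose Galois group over ℚ is the full symmetric group S_d acting on the d distinct roots Z_g ⊂ ℂ. Then the module of additive relations R_g = {α : Z_g → ℤ : ∑_x α(x)·x = 0} is either trivial or generated by the constant function 1, and the latter holds if and only if the coefficient of X^{d−1} in g is zero. -/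
/-- if the Galois group of g acts on the d distinct roots as the
full symmetric group, every additive relation among the roots is constant, and
the constant relation 1 holds iff the coefficient of X^(d-1) vanishes. -/
theorem stmt_9 (g : Polynomial ℤ) (hmonic : g.Monic)
    (d : ℕ) (hd : g.natDegree = d) (hd2 : 2 ≤ d)
    (K : Type) [Field K] [CharZero K] [Algebra ℚ K]
    (x : Fin d → K) (hinj : Function.Injective x)
    (hfact : g.map (Int.castRingHom K)
      = ∏ i : Fin d, (Polynomial.X - Polynomial.C (x i)))
    (hgen : Algebra.adjoin ℚ (Set.range x) = ⊤)
    (hGal : ∀ σ : Equiv.Perm (Fin d), ∃ φ : K ≃ₐ[ℚ] K, ∀ i, φ (x i) = x (σ i)) :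
    (∀ α : Fin d → ℤ, (∑ i : Fin d, (α i : K) * x i = 0) →
      ∃ c : ℤ, ∀ i, α i = c) ∧
    ((∑ i : Fin d, x i = 0) ↔ g.coeff (d - 1) = 0) := by
  have hd0 : 0 < d := lt_of_lt_of_le two_pos hd2
  constructor
  · intro α hα
    have key : ∀ i j : Fin d, α i = α j := by
      intro i j
      by_cases hij : i = j
      · rw [hij]
      · set σ := Equiv.swap i j with hσ
        obtain ⟨φ, hφ⟩ := hGal σ
        have h1 : ∑ k : Fin d, (α k : K) * x (σ k) = 0 := by
          have := congrArg φ hα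
          simpa [map_sum, map_mul, map_intCast, hφ] using this
        have h2 : ∑ k : Fin d, (α (σ k) : K) * x k = 0 := by
          have h3 := Equiv.sum_comp σ (fun k => (α k : K) * x (σ k))
          have h4 : ∀ k, (α (σ k) : K) * x (σ (σ k)) = (α (σ k) : K) * x k := by
            intro k; rw [Equiv.swap_apply_self]
          calc ∑ k : Fin d, (α (σ k) : K) * x k
              = ∑ k : Fin d, (α (σ k) : K) * x (σ (σ k)) := by
                refine Finset.sum_congr rfl fun k _ => (h4 k).symm
            _ = ∑ k : Fin d, (α k : K) * x (σ k) := h3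
            _ = 0 := h1
        have h5 : ∑ k : Fin d, ((α (σ k) : K) - α k) * x k = 0 := by
          have := sub_eq_zero_of_eq (h2.trans hα.symm)
          rw [← Finset.sum_sub_distrib] at this
          simpa [sub_mul] using this
        have h6 : ∑ k : Fin d, ((α (σ k) : K) - α k) * x k
            = ∑ k ∈ ({i, j} : Finset (Fin d)), ((α (σ k) : K) - α k) * x k := by
          refine (Finset.sum_subset (Finset.subset_univ _) ?_).symm
          intro k _ hk
          have hki : k ≠ i := fun h => hk (by simp [h])
          have hkj : k ≠ j := fun h => hk (by simp [h])
          rw [hσ, Equiv.swap_apply_of_ne_of_ne hki hkj]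
          simp
        rw [h6, Finset.sum_pair hij] at h5
        rw [hσ, Equiv.swap_apply_left, Equiv.swap_apply_right] at h5
        have h7 : ((α j : K) - α i) * (x i - x j) = 0 := by ring_nf; ring_nf at h5; linear_combination h5
        rcases mul_eq_zero.mp h7 with h | h
        · have : (α j : K) = α i := sub_eq_zero.mp h
          exact_mod_cast this.symm
        · exact absurd (hinj (sub_eq_zero.mp h)) hij
    exact ⟨α ⟨0, hd0⟩, fun i => key i ⟨0, hd0⟩⟩
  · have hnd : (∏ i : Fin d, (Polynomial.X - Polynomial.C (x i))).natDegree = d := by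
      rw [Polynomial.natDegree_prod _ _ (fun i _ => Polynomial.X_sub_C_ne_zero (x i))]
      simp
    have hc : ((g.coeff (d - 1) : K)) = -∑ i : Fin d, x i := by
      have := Polynomial.prod_X_sub_C_nextCoeff (s := (Finset.univ : Finset (Fin d))) x
      rw [Polynomial.nextCoeff_of_natDegree_pos (by rw [hnd]; exact hd0), hnd] at this
      rw [← this, ← hfact, Polynomial.coeff_map]
      simp
    constructor
    · intro h
      have : ((g.coeff (d - 1) : K)) = 0 := by rw [hc, h, neg_zero]
      exact_mod_cast this
    · intro h
      have : ((g.coeff (d - 1) : K)) = 0 := by exact_mod_cast congrArg (Int.cast : ℤ → K) h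
      rw [hc] at this
      exact neg_eq_zero.mp this
end

section
/- Let Δ < −4 be the discriminant of an imaginary quadratic order and H_Δ ∈ ℤ[X] the associated Hilbert class polynomial, assumed irreducible of degree h ≥ 1 over ℚ, with roots the j-invariants j(τ₁), …, j(τ_h) where τ₁ ∈ F has Im(τ₁) ≥ √|Δ|/2 and Im(τ_i) ≤ √|Δ|/4 for i ≥ 2 (F the standard fundamental domain). Assume the bounds ||j(τ)| − e^{2π Im(τ)}| ≤ 2079 for τ ∈ F and h ≤ (√|Δ|/π)(log|Δ| + 2). Then if e^{π√|Δ|} − 2079 > h·(e^{π√|Δ|/2} + 2079), the module of additive relations of H_Δ is trivial, i.e., the only α : Z_{H_Δ} → ℤ with ∑_x α(x)·x = 0 is zero. -/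
/-!
If `∑ c x • x = 0` is a rational relation among the roots of an irreducible polynomial, then so is
every Galois conjugate of it, and the Galois group permutes the roots transitively. Conjugating,
we may assume the coefficient of largest absolute value sits at a root `x₀` whose absolute value
exceeds the sum of those of the other roots; the triangle inequality then forces that coefficient,
hence all of them, to vanish. For the Hilbert class polynomial the estimates on `|j(τ)|` make
`j(τ₁)` such a dominant root.
-/
open Finset Polynomial

theorem eq_zero_of_sum_smul_eq_zero_of_dominant {ι E : Type*} [Fintype ι] [DecidableEq ι]
    [NormedAddCommGroup E] [NormedSpace ℝ E] (v : ι → E) (i₀ : ι)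
    (hdom : ∑ i ∈ univ.erase i₀, ‖v i‖ < ‖v i₀‖) (c : ι → ℝ) (hmax : ∀ i, |c i| ≤ |c i₀|)
    (hrel : ∑ i, c i • v i = 0) : c i₀ = 0 := by
  have hsplit : c i₀ • v i₀ = -∑ i ∈ univ.erase i₀, c i • v i := by
    rw [eq_neg_iff_add_eq_zero, add_comm, sum_erase_add _ _ (mem_univ i₀), hrel]
  have hle : |c i₀| * ‖v i₀‖ ≤ |c i₀| * ∑ i ∈ univ.erase i₀, ‖v i‖ :=
    calc |c i₀| * ‖v i₀‖ = ‖∑ i ∈ univ.erase i₀, c i • v i‖ := by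
          rw [← Real.norm_eq_abs, ← norm_smul, hsplit, norm_neg]
      _ ≤ ∑ i ∈ univ.erase i₀, |c i| * ‖v i‖ := by
          simpa only [norm_smul, Real.norm_eq_abs] using
            norm_sum_le (univ.erase i₀) fun i => c i • v i
      _ ≤ |c i₀| * ∑ i ∈ univ.erase i₀, ‖v i‖ := by
          rw [mul_sum]
          exact sum_le_sum fun i _ => mul_le_mul_of_nonneg_right (hmax i) (norm_nonneg _)
  by_contra hc
  exact (mul_le_mul_iff_of_pos_left (abs_pos.mpr hc)).mp hle |>.not_gt hdom

theorem Polynomial.Gal.sum_smul_coe_smul_eq_zero {F E : Type*} [Field F] [Field E] [Algebra F E]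
    (p : F[X]) [Fact ((p.map (algebraMap F E)).Splits)] (c : p.rootSet E → F)
    (hrel : ∑ x, c x • (x : E) = 0) (ϕ : p.Gal) : ∑ x, c x • ((ϕ • x : p.rootSet E) : E) = 0 := by
  set ι := IsScalarTower.toAlgHom F p.SplittingField E
  have hcoe : ∀ y, ((rootsEquivRoots p E y : p.rootSet E) : E) = ι y := fun _ => rfl
  have hrel' : ∑ x, c x • ((rootsEquivRoots p E).symm x : p.SplittingField) = 0 := by
    refine (map_eq_zero_iff ι ι.injective).mp ?_
    rw [map_sum, ← hrel]
    refine sum_congr rfl fun x _ => ?_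
    rw [map_smul, ← hcoe, Equiv.apply_symm_apply]
  have hact : ∀ y : p.rootSet p.SplittingField, ((ϕ • y : p.rootSet p.SplittingField) : _) = ϕ y :=
    fun _ => rfl
  simp only [smul_def, hcoe, hact]
  rw [← map_zero ι, ← map_zero ϕ, ← hrel', map_sum, map_sum]
  simp only [map_smul]

theorem Polynomial.linearIndependent_rootSet_of_dominant (p : ℚ[X]) (hp : Irreducible p)
    (x₀ : p.rootSet ℂ) (hdom : ∑ x ∈ univ.erase x₀, ‖(x : ℂ)‖ < ‖(x₀ : ℂ)‖) :
    LinearIndependent ℚ (fun x : p.rootSet ℂ => (x : ℂ)) := by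
  have : Fact ((p.map (algebraMap ℚ ℂ)).Splits) := ⟨IsAlgClosed.splits _⟩
  have := Gal.galAction_isPretransitive p ℂ hp
  rw [Fintype.linearIndependent_iff]
  intro c hrel
  obtain ⟨x, -, hmax⟩ := exists_max_image univ (fun x => |c x|) ⟨x₀, mem_univ _⟩
  obtain ⟨ϕ, hϕ⟩ := MulAction.exists_smul_eq p.Gal x x₀
  have hrelϕ : ∑ y, c (ϕ⁻¹ • y) • (y : ℂ) = 0 := by
    rw [← Gal.sum_smul_coe_smul_eq_zero p c hrel ϕ]
    exact (Fintype.sum_equiv (MulAction.toPerm ϕ) _ _ fun y => by simp).symm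
  have hmaxϕ : ∀ y, |(c (ϕ⁻¹ • y) : ℝ)| ≤ |(c (ϕ⁻¹ • x₀) : ℝ)| := by
    intro y
    rw [← hϕ, inv_smul_smul]
    exact_mod_cast hmax _ (mem_univ _)
  have hx : (c (ϕ⁻¹ • x₀) : ℝ) = 0 :=
    eq_zero_of_sum_smul_eq_zero_of_dominant (fun y : p.rootSet ℂ => (y : ℂ)) x₀ hdom
      (fun y => (c (ϕ⁻¹ • y) : ℝ)) hmaxϕ (by simpa [Rat.cast_smul_eq_qsmul] using hrelϕ)
  rw [← hϕ, inv_smul_smul, Rat.cast_eq_zero] at hx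
  intro y
  simpa [hx] using hmax y (mem_univ y)

theorem Polynomial.linearIndependent_of_injective_of_dominant {ι : Type*} [Fintype ι]
    [DecidableEq ι] (p : ℚ[X]) (hp : Irreducible p) (r : ι → ℂ) (hroots : ∀ i, aeval (r i) p = 0)
    (hinj : Function.Injective r) (hcard : Fintype.card ι = p.natDegree) (i₀ : ι)
    (hdom : ∑ i ∈ univ.erase i₀, ‖r i‖ < ‖r i₀‖) : LinearIndependent ℚ r := by
  have hmem : ∀ i, r i ∈ p.rootSet ℂ := fun i => mem_rootSet.mpr ⟨hp.ne_zero, hroots i⟩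
  have hcard' : Fintype.card (p.rootSet ℂ) = Fintype.card ι := by
    rw [card_rootSet_eq_natDegree hp.separable (IsAlgClosed.splits _), hcard]
  let e : ι ≃ p.rootSet ℂ := Equiv.ofBijective (fun i => ⟨r i, hmem i⟩)
    ((Fintype.bijective_iff_injective_and_card _).mpr
      ⟨fun i j hij => hinj (congrArg Subtype.val hij), hcard'.symm⟩)
  have hdom' : ∑ x ∈ univ.erase (e i₀), ‖(x : ℂ)‖ < ‖(e i₀ : ℂ)‖ := by
    rw [sum_erase_eq_sub (mem_univ _), ← e.sum_comp (fun x : p.rootSet ℂ => ‖(x : ℂ)‖)]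
    rwa [sum_erase_eq_sub (mem_univ _)] at hdom
  exact (linearIndependent_equiv e).mpr (p.linearIndependent_rootSet_of_dominant hp _ hdom')

theorem sum_erase_norm_lt_of_bounds {ι E : Type*} [Fintype ι] [DecidableEq ι]
    [SeminormedAddCommGroup E] (v : ι → E) (i₀ : ι) {L U : ℝ} (hU : 0 ≤ U)
    (hlow : L ≤ ‖v i₀‖) (hup : ∀ i ≠ i₀, ‖v i‖ ≤ U) (hLU : Fintype.card ι * U < L) :
    ∑ i ∈ univ.erase i₀, ‖v i‖ < ‖v i₀‖ :=
  calc ∑ i ∈ univ.erase i₀, ‖v i‖ ≤ (univ.erase i₀).card • U :=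
        sum_le_card_nsmul _ _ _ fun i hi => hup i (ne_of_mem_erase hi)
    _ ≤ Fintype.card ι * U := by
        rw [nsmul_eq_mul]
        gcongr
        exact_mod_cast card_le_univ _
    _ < ‖v i₀‖ := hLU.trans_le hlow

theorem stmt_15_general (Δ : ℤ)
    (P : Polynomial ℤ)
    (hirr : Irreducible (P.map (Int.castRingHom ℚ)))
    (h : ℕ) (hh1 : 1 ≤ h) (hdeg : P.natDegree = h)
    (r : Fin h → ℂ) (hroots : ∀ i, Polynomial.aeval (r i) P = 0)
    (hinj : Function.Injective r)
    (t : Fin h → ℝ)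
    (ht1 : Real.sqrt |(Δ : ℝ)| / 2 ≤ t ⟨0, hh1⟩)
    (hti : ∀ i : Fin h, i ≠ ⟨0, hh1⟩ → t i ≤ Real.sqrt |(Δ : ℝ)| / 4)
    (hbound : ∀ i, |‖r i‖ - Real.exp (2 * Real.pi * t i)| ≤ 2079)
    (hmain : (h : ℝ) * (Real.exp (Real.pi * Real.sqrt |(Δ : ℝ)| / 2) + 2079)
      < Real.exp (Real.pi * Real.sqrt |(Δ : ℝ)|) - 2079) :
    ∀ α : Fin h → ℤ, (∑ i : Fin h, (α i : ℂ) * r i = 0) → α = 0 := by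
  intro α hrel
  set i₀ : Fin h := ⟨0, hh1⟩
  have hroots' : ∀ i, aeval (r i) (P.map (Int.castRingHom ℚ)) = 0 := fun i =>
    (aeval_map_algebraMap ℚ (r i) P).trans (hroots i)
  have hdeg' : (P.map (Int.castRingHom ℚ)).natDegree = Fintype.card (Fin h) := by
    rw [natDegree_map_eq_of_injective (RingHom.injective_int _), hdeg, Fintype.card_fin]
  have hlow : Real.exp (Real.pi * Real.sqrt |(Δ : ℝ)|) - 2079 ≤ ‖r i₀‖ := by
    have := Real.exp_le_exp.mpr (show Real.pi * Real.sqrt |(Δ : ℝ)| ≤ 2 * Real.pi * t i₀ by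
      nlinarith [Real.pi_pos])
    linarith [(abs_le.mp (hbound i₀)).1]
  have hup : ∀ i ≠ i₀, ‖r i‖ ≤ Real.exp (Real.pi * Real.sqrt |(Δ : ℝ)| / 2) + 2079 := by
    intro i hi
    have := Real.exp_le_exp.mpr (show 2 * Real.pi * t i ≤ Real.pi * Real.sqrt |(Δ : ℝ)| / 2 by
      nlinarith [Real.pi_pos, hti i hi])
    linarith [(abs_le.mp (hbound i)).2]
  have hdom := sum_erase_norm_lt_of_bounds r i₀ (by positivity) hlow hup (by simpa using hmain)
  have hind := linearIndependent_of_injective_of_dominant _ hirr r hroots' hinj hdeg'.symm i₀ hdom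
  ext i
  exact_mod_cast Fintype.linearIndependent_iff.mp hind (fun i => (α i : ℚ))
    (by simpa [Rat.smul_def] using hrel) i

/-- under the stated analytic bounds on the j-invariants (the
roots of the Hilbert class polynomial H_Δ), if
e^{π√|Δ|} − 2079 > h·(e^{π√|Δ|/2} + 2079) then the module of additive
relations of H_Δ is trivial. -/
theorem stmt_15 (Δ : ℤ) (hΔ : Δ < -4)
    (P : Polynomial ℤ) (hmonic : P.Monic)
    (hirr : Irreducible (P.map (Int.castRingHom ℚ)))
    (h : ℕ) (hh1 : 1 ≤ h) (hdeg : P.natDegree = h)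
    (r : Fin h → ℂ) (hroots : ∀ i, Polynomial.aeval (r i) P = 0)
    (hinj : Function.Injective r)
    (t : Fin h → ℝ)
    (ht1 : Real.sqrt |(Δ : ℝ)| / 2 ≤ t ⟨0, hh1⟩)
    (hti : ∀ i : Fin h, i ≠ ⟨0, hh1⟩ → t i ≤ Real.sqrt |(Δ : ℝ)| / 4)
    (hbound : ∀ i, |‖r i‖ - Real.exp (2 * Real.pi * t i)| ≤ 2079)
    (hclass : (h : ℝ) ≤ Real.sqrt |(Δ : ℝ)| / Real.pi * (Real.log |(Δ : ℝ)| + 2))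
    (hmain : (h : ℝ) * (Real.exp (Real.pi * Real.sqrt |(Δ : ℝ)| / 2) + 2079)
      < Real.exp (Real.pi * Real.sqrt |(Δ : ℝ)|) - 2079) :
    ∀ α : Fin h → ℤ, (∑ i : Fin h, (α i : ℂ) * r i = 0) → α = 0 :=
  stmt_15_general Δ P hirr h hh1 hdeg r hroots hinj t ht1 hti hbound hmain
end
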